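/- Let n ≥ 2, let 0 ≤ i < j ≤ n−1, and let m denote the order of f^B_i f^B_j in B_n. Then for every s with 1 ≤ s ≤ m−1 and every 0 ≤ k ≤ n−1, one has (f^B_i f^B_j)^s ≠ f^B_k; and for every s with 1 ≤ s ≤ m−2 and every 0 ≤ k ≤ n−1, one has (f^B_i f^B_j)^s f^B_i ≠ f^B_k. (Equivalently, the alternating (f^B_i, f^B_j)-cycles in the burnt pancake graph of B_n have no chords.) -/

import Mathlib

/-!
Write `g = f_i f_j`. If `g^s = f_k`, then `f_k` commutes with `g`; if `g^s f_i = f_k`, then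
`g^s = f_k f_i`, so `f_k f_i` commutes with `g`. Evaluating at one well-chosen point shows that no
`f_k` commutes with `g`, and neither does `f_k f_i` for `k ∉ {i, j}`. The remaining cases give
`g^s = f_i f_i = 1` and `g^s = f_j f_i = g⁻¹`, which contradict `s + 1 < orderOf g`.
-/

/-- The burnt pancake generator `f^B_m` of the hyperoctahedral group `B_n` of signed
permutations, modeled as a permutation of `Fin n × Bool` (a `0`-indexed position together
with a sign, `false` meaning positive): it reverses and negates the first `m+1` entries,
sending `(a, s)` to `(m - a, !s)` whenever `a ≤ m` (and `m < n`), and fixing all other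
points.  (In `1`-indexed terms, `f^B_m a = -(m + 2 - a)` for `1 ≤ a ≤ m + 1` and
`f^B_m a = a` for `m + 1 < a ≤ n`; for `m = 0` it is the sign change of the first entry.) -/
def bpancake (n m : ℕ) : Equiv.Perm (Fin n × Bool) :=
  Function.Involutive.toPerm
    (fun x => if h : (x.1 : ℕ) ≤ m ∧ m < n then
        (⟨m - (x.1 : ℕ), Nat.lt_of_le_of_lt (Nat.sub_le m x.1) h.2⟩, !x.2) else x)
    (by
      intro x
      dsimp only
      by_cases h : (x.1 : ℕ) ≤ m ∧ m < n
      · rw [dif_pos h, dif_pos ⟨Nat.sub_le m (x.1 : ℕ), h.2⟩]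
        exact Prod.ext (Fin.ext (Nat.sub_sub_self h.1)) (Bool.not_not x.2)
      · rw [dif_neg h, dif_neg h])

section

variable {n : ℕ}

lemma bpancake_apply_of_le {m a : ℕ} (ha : a ≤ m) (hm : m < n) (s : Bool) :
    bpancake n m (⟨a, by omega⟩, s) = (⟨m - a, by omega⟩, !s) :=
  dif_pos ⟨ha, hm⟩

lemma bpancake_apply_of_lt {m a : ℕ} (h : m < a) (ha : a < n) (s : Bool) :
    bpancake n m (⟨a, ha⟩, s) = (⟨a, ha⟩, s) :=
  dif_neg fun hc => absurd hc.1 (Nat.not_le.mpr h)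

lemma bpancake_inv (m : ℕ) : (bpancake n m)⁻¹ = bpancake n m :=
  Function.Involutive.toPerm_symm _

lemma bpancake_mul_self (m : ℕ) : bpancake n m * bpancake n m = 1 :=
  inv_eq_iff_mul_eq_one.mp (bpancake_inv m)

lemma not_commute_bpancake_mul {i j k : ℕ} (hij : i < j) (hj : j < n) (hk : k < n) :
    ¬Commute (bpancake n k) (bpancake n i * bpancake n j) := by
  intro hc
  have h := DFunLike.congr_fun hc.eq (⟨0, by omega⟩, false)
  simp only [Equiv.Perm.mul_apply] at h
  rcases lt_trichotomy k j with hkj | rfl | hjk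
  · rcases le_or_gt (j - k) i with hi | hi
    · simp (disch := omega) [bpancake_apply_of_le, bpancake_apply_of_lt, Prod.ext_iff] at h
      omega
    · simp (disch := omega) [bpancake_apply_of_le, bpancake_apply_of_lt, Prod.ext_iff] at h
  all_goals simp (disch := omega) [bpancake_apply_of_le, bpancake_apply_of_lt, Prod.ext_iff] at h

lemma not_commute_bpancake_mul_bpancake_mul {i j k : ℕ} (hij : i < j) (hj : j < n)
    (hk : k < n) (hki : k ≠ i) (hkj : k ≠ j) :
    ¬Commute (bpancake n k * bpancake n i) (bpancake n i * bpancake n j) := by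
  intro hc
  rcases lt_or_gt_of_ne hkj with hkj | hjk
  · have h := DFunLike.congr_fun hc.eq (⟨0, by omega⟩, false)
    simp only [Equiv.Perm.mul_apply] at h
    rcases lt_or_gt_of_ne hki with hki | hik
    · rcases le_or_gt (j - i) i with hi | hi
      · simp (disch := omega) [bpancake_apply_of_le, bpancake_apply_of_lt, Prod.ext_iff] at h
        omega
      · simp (disch := omega) [bpancake_apply_of_le, bpancake_apply_of_lt, Prod.ext_iff] at h
    · simp (disch := omega) [bpancake_apply_of_le, bpancake_apply_of_lt, Prod.ext_iff] at h
      omega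
  -- for `j < k ≤ i + j` both sides agree at the first position
  · have h := DFunLike.congr_fun hc.eq (⟨k, hk⟩, false)
    simp only [Equiv.Perm.mul_apply] at h
    simp (disch := omega) [bpancake_apply_of_le, bpancake_apply_of_lt, Prod.ext_iff] at h

end

theorem bpancake_cycles_no_chords_general (n i j : ℕ) (hij : i < j)
    (hj : j ≤ n - 1) :
    (∀ s, 1 ≤ s → s ≤ orderOf (bpancake n i * bpancake n j) - 1 →
      ∀ k ≤ n - 1, (bpancake n i * bpancake n j) ^ s ≠ bpancake n k) ∧
    (∀ s, 1 ≤ s → s ≤ orderOf (bpancake n i * bpancake n j) - 2 →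
      ∀ k ≤ n - 1, (bpancake n i * bpancake n j) ^ s * bpancake n i ≠ bpancake n k) := by
  have hjn : j < n := by omega
  set g := bpancake n i * bpancake n j
  have hcomm (s : ℕ) : Commute (g ^ s) g := (Commute.self_pow g s).symm
  refine ⟨fun s _ _ k hk hgs => ?_, fun s hs1 hs k hk hgs => ?_⟩
  · exact not_commute_bpancake_mul hij hjn (by omega) (hgs ▸ hcomm s)
  have hgs : g ^ s = bpancake n k * bpancake n i := by
    rw [eq_mul_inv_of_mul_eq hgs, bpancake_inv]
  obtain rfl | hki := eq_or_ne k i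
  · have := orderOf_le_of_pow_eq_one (by omega) (hgs.trans (bpancake_mul_self _))
    omega
  obtain rfl | hkj := eq_or_ne k j
  · have hinv : g ^ s = g⁻¹ := by rw [hgs, mul_inv_rev, bpancake_inv, bpancake_inv]
    have := orderOf_le_of_pow_eq_one (x := g) s.succ_pos (by rw [pow_succ, hinv, inv_mul_cancel])
    omega
  exact not_commute_bpancake_mul_bpancake_mul hij hjn (by omega) hki hkj (hgs ▸ hcomm s)

/-- Let `n ≥ 2`, `0 ≤ i < j ≤ n - 1`, and let `m` be the order of `f^B_i f^B_j` in
`B_n`.  Then for every `1 ≤ s ≤ m - 1` and every `0 ≤ k ≤ n - 1` one has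
`(f^B_i f^B_j)^s ≠ f^B_k`, and for every `1 ≤ s ≤ m - 2` and every `0 ≤ k ≤ n - 1`
one has `(f^B_i f^B_j)^s f^B_i ≠ f^B_k`.  (Equivalently, the alternating
`(f^B_i, f^B_j)`-cycles in the burnt pancake graph of `B_n` have no chords.) -/
theorem bpancake_cycles_no_chords (n i j : ℕ) (hn : 2 ≤ n) (hij : i < j)
    (hj : j ≤ n - 1) :
    (∀ s, 1 ≤ s → s ≤ orderOf (bpancake n i * bpancake n j) - 1 →
      ∀ k ≤ n - 1, (bpancake n i * bpancake n j) ^ s ≠ bpancake n k) ∧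
    (∀ s, 1 ≤ s → s ≤ orderOf (bpancake n i * bpancake n j) - 2 →
      ∀ k ≤ n - 1, (bpancake n i * bpancake n j) ^ s * bpancake n i ≠ bpancake n k) :=
  bpancake_cycles_no_chords_general n i j hij hj
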